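/- Define the quadratic map f of the real projective plane by f([x₀:x₁:x₂]) = [x₁²+x₂² : x₀x₂ : x₀x₁], defined at all points where the vector (x₁²+x₂², x₀x₂, x₀x₁) is nonzero. For every point [x₀:x₁:x₂] ∈ ℙ²(ℝ) with x₀ ≠ 0 and (x₁,x₂) ≠ (0,0), both f([x₀:x₁:x₂]) and f(f([x₀:x₁:x₂])) are defined, and f(f([x₀:x₁:x₂])) = [x₀:x₁:x₂]; indeed the coordinate vector obtained by applying the defining polynomials twice equals x₀(x₁²+x₂²)·(x₀,x₁,x₂). -/

import Mathlib

/-- The defining polynomials of the quadratic map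
`f([x₀:x₁:x₂]) = [x₁² + x₂² : x₀x₂ : x₀x₁]` of the real projective plane. -/
noncomputable def quadMap (v : Fin 3 → ℝ) : Fin 3 → ℝ :=
  ![v 1 ^ 2 + v 2 ^ 2, v 0 * v 2, v 0 * v 1]

lemma quadMap_ne_zero {v : Fin 3 → ℝ} (hv : v 1 ^ 2 + v 2 ^ 2 ≠ 0) : quadMap v ≠ 0 :=
  fun h => hv (congrFun h 0)

lemma quadMap_quadMap (v : Fin 3 → ℝ) :
    quadMap (quadMap v) = (v 0 * (v 1 ^ 2 + v 2 ^ 2)) • v := by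
  ext i
  fin_cases i <;>
    simp only [quadMap, Fin.zero_eta, Fin.mk_one, Fin.reduceFinMk, Matrix.cons_val_zero,
      Matrix.cons_val_one, Matrix.cons_val, Pi.smul_apply, smul_eq_mul] <;>
    ring

lemma quadMap_quadMap_ne_zero {v : Fin 3 → ℝ} (hv : v 0 * (v 1 ^ 2 + v 2 ^ 2) ≠ 0) :
    quadMap (quadMap v) ≠ 0 := by
  rw [quadMap_quadMap]
  exact smul_ne_zero hv fun h => left_ne_zero_of_mul hv (congrFun h 0)

lemma mk_quadMap_quadMap {v : Fin 3 → ℝ} (hv : v ≠ 0) (hff : quadMap (quadMap v) ≠ 0) :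
    Projectivization.mk ℝ (quadMap (quadMap v)) hff = Projectivization.mk ℝ v hv :=
  (Projectivization.mk_eq_mk_iff' ℝ _ _ hff hv).2 ⟨_, (quadMap_quadMap v).symm⟩

/-- For every point `[x₀:x₁:x₂] ∈ ℙ²(ℝ)` with `x₀ ≠ 0` and `(x₁,x₂) ≠ (0,0)`, both
`f([x₀:x₁:x₂])` and `f(f([x₀:x₁:x₂]))` are defined, and `f(f([x₀:x₁:x₂])) = [x₀:x₁:x₂]`;
indeed applying the defining polynomials twice gives `x₀(x₁² + x₂²)·(x₀,x₁,x₂)`. -/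
theorem stmt_7 (x₀ x₁ x₂ : ℝ) (h₀ : x₀ ≠ 0) (h₁₂ : ¬(x₁ = 0 ∧ x₂ = 0)) :
    quadMap ![x₀, x₁, x₂] ≠ 0 ∧
    quadMap (quadMap ![x₀, x₁, x₂]) ≠ 0 ∧
    quadMap (quadMap ![x₀, x₁, x₂]) = (x₀ * (x₁ ^ 2 + x₂ ^ 2)) • ![x₀, x₁, x₂] ∧
    ∀ (hv : (![x₀, x₁, x₂] : Fin 3 → ℝ) ≠ 0)
      (hff : quadMap (quadMap ![x₀, x₁, x₂]) ≠ 0),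
      Projectivization.mk ℝ (quadMap (quadMap ![x₀, x₁, x₂])) hff =
        Projectivization.mk ℝ ![x₀, x₁, x₂] hv := by
  have hs : x₁ ^ 2 + x₂ ^ 2 ≠ 0 := by
    rwa [ne_eq, sq, sq, mul_self_add_mul_self_eq_zero]
  exact ⟨quadMap_ne_zero hs, quadMap_quadMap_ne_zero (mul_ne_zero h₀ hs),
    quadMap_quadMap _, fun hv hff => mk_quadMap_quadMap hv hff⟩
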